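/- Let (F_n) be a sequence of Möbius transformations acting on the ball model 𝔹³ such that Σ_n exp(−ρ(0, F_n(0))) < ∞ and ρ(F_{n−1}(0), F_n(0)) ≤ k for all n and some constant k. Then the sequence (F_n(0)) converges in the Euclidean metric to a point of the closed unit ball, and since ρ(0, F_n(0)) → ∞, the limit lies on the unit sphere. -/

import Mathlib

/-- The hyperbolic metric on the unit ball model `𝔹³`, via the standard formula
`sinh (ρ(z,w)/2) = |z - w| / √((1-|z|²)(1-|w|²))`. -/
noncomputable def rhoB (z w : EuclideanSpace ℝ (Fin 3)) : ℝ :=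
  2 * Real.arsinh (‖z - w‖ / Real.sqrt ((1 - ‖z‖ ^ 2) * (1 - ‖w‖ ^ 2)))

open Real

lemma exp_neg_rhoB_zero (z : EuclideanSpace ℝ (Fin 3)) (hz : ‖z‖ < 1) :
    Real.exp (-(rhoB 0 z)) = (1 - ‖z‖) / (1 + ‖z‖) := by
  set t := ‖z‖ with ht
  have ht0 : 0 ≤ t := norm_nonneg z
  have h1 : (0:ℝ) < 1 - t ^ 2 := by nlinarith
  have hr : (0:ℝ) < Real.sqrt (1 - t ^ 2) := Real.sqrt_pos.mpr h1
  set r := Real.sqrt (1 - t ^ 2) with hrr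
  have hr2 : r ^ 2 = 1 - t ^ 2 := Real.sq_sqrt h1.le
  have hrho : rhoB 0 z = 2 * Real.arsinh (t / r) := by
    unfold rhoB
    rw [zero_sub, norm_neg, norm_zero]
    norm_num
    rfl
  set s := t / r with hs
  have h1s : Real.sqrt (1 + s ^ 2) = 1 / r := by
    have : 1 + s ^ 2 = (1 / r) ^ 2 := by
      rw [hs]
      field_simp
      nlinarith [hr2]
    rw [this, Real.sqrt_sq (by positivity)]
  have key : Real.exp (-(Real.arsinh s)) = (1 - t) / r := by
    rw [← Real.cosh_sub_sinh, Real.cosh_arsinh, Real.sinh_arsinh, h1s, hs]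
    field_simp
  have : Real.exp (-(rhoB 0 z)) = (Real.exp (-(Real.arsinh s))) ^ 2 := by
    rw [hrho, show -(2 * Real.arsinh s) = -Real.arsinh s + -Real.arsinh s by ring,
      Real.exp_add, sq]
  rw [this, key]
  have h1t : (0:ℝ) < 1 + t := by linarith
  field_simp
  nlinarith [hr2]

/-- If the orbit points `z n = F n (0)` of a sequence of Möbius isometries
of `𝔹³` satisfy `Σ exp(-ρ(0, z n)) < ∞` and `ρ(z (n-1), z n) ≤ k`, then `(z n)`
converges in the Euclidean metric to a point of the closed unit ball, and the limit lies
on the unit sphere. -/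
theorem stmt16 (k : ℝ) (z : ℕ → EuclideanSpace ℝ (Fin 3)) (hz : ∀ n, ‖z n‖ < 1)
    (hsum : Summable fun n => Real.exp (-(rhoB 0 (z n))))
    (hstep : ∀ n, rhoB (z n) (z (n + 1)) ≤ k) :
    ∃ p : EuclideanSpace ℝ (Fin 3), ‖p‖ = 1 ∧
      Filter.Tendsto z Filter.atTop (nhds p) := by
  set e : ℕ → ℝ := fun n => Real.exp (-(rhoB 0 (z n))) with he
  have hee : ∀ n, e n = (1 - ‖z n‖) / (1 + ‖z n‖) := fun n => exp_neg_rhoB_zero _ (hz n)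
  have hbound : ∀ n, 1 - ‖z n‖ ^ 2 ≤ 4 * e n := by
    intro n
    have h := hee n
    have h0 := norm_nonneg (z n); have h1 := hz n
    have h2 : (0:ℝ) < 1 + ‖z n‖ := by linarith
    have h3 : e n * (1 + ‖z n‖) = 1 - ‖z n‖ := by rw [h]; field_simp
    nlinarith [Real.exp_pos (-(rhoB 0 (z n)))]
  -- sinh (k/2) ≥ 0
  have hk : 0 ≤ Real.sinh (k / 2) := by
    have h0 : 0 ≤ rhoB (z 0) (z 1) := by
      unfold rhoB
      have : 0 ≤ Real.arsinh (‖z 0 - z 1‖ / Real.sqrt ((1 - ‖z 0‖ ^ 2) * (1 - ‖z 1‖ ^ 2))) :=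
        Real.arsinh_nonneg_iff.mpr (by positivity)
      linarith
    have := hstep 0
    have : 0 ≤ k / 2 := by linarith
    exact Real.sinh_nonneg_iff.mpr this
  have hdist : ∀ n, dist (z n) (z (n + 1)) ≤ 2 * Real.sinh (k / 2) * (4 * e n + 4 * e (n + 1)) := by
    intro n
    set A := 1 - ‖z n‖ ^ 2 with hA
    set B := 1 - ‖z (n + 1)‖ ^ 2 with hB
    have hA0 : 0 < A := by have := hz n; have := norm_nonneg (z n); nlinarith
    have hB0 : 0 < B := by have := hz (n+1); have := norm_nonneg (z (n+1)); nlinarith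
    have hS : 0 < Real.sqrt (A * B) := Real.sqrt_pos.mpr (by positivity)
    have hSsq : Real.sqrt (A * B) * Real.sqrt (A * B) = A * B :=
      Real.mul_self_sqrt (by positivity)
    have heq : ‖z n - z (n + 1)‖ =
        Real.sinh (rhoB (z n) (z (n + 1)) / 2) * Real.sqrt (A * B) := by
      unfold rhoB
      rw [show 2 * Real.arsinh (‖z n - z (n+1)‖ / Real.sqrt ((1 - ‖z n‖ ^ 2) * (1 - ‖z (n+1)‖ ^ 2))) / 2
          = Real.arsinh (‖z n - z (n+1)‖ / Real.sqrt ((1 - ‖z n‖ ^ 2) * (1 - ‖z (n+1)‖ ^ 2))) by ring,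
        Real.sinh_arsinh]
      field_simp
      rw [mul_div_assoc, show Real.sqrt (A * B) / Real.sqrt ((1 - ‖z n‖ ^ 2) * (1 - ‖z (n + 1)‖ ^ 2)) = 1 from div_self hS.ne', mul_one]
    have hmono : Real.sinh (rhoB (z n) (z (n + 1)) / 2) ≤ Real.sinh (k / 2) :=
      Real.sinh_le_sinh.mpr (by linarith [hstep n])
    have hsqrtle : Real.sqrt (A * B) ≤ A + B := by
      nlinarith [hS.le, hA0.le, hB0.le]
    have h1 : dist (z n) (z (n + 1)) = ‖z n - z (n + 1)‖ := dist_eq_norm _ _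
    calc dist (z n) (z (n + 1)) = Real.sinh (rhoB (z n) (z (n + 1)) / 2) * Real.sqrt (A * B) := by
          rw [h1, heq]
      _ ≤ Real.sinh (k / 2) * (A + B) := by
          apply mul_le_mul hmono hsqrtle hS.le hk
      _ ≤ 2 * Real.sinh (k / 2) * (4 * e n + 4 * e (n + 1)) := by
          nlinarith [hbound n, hbound (n + 1), hk]
  have hsum2 : Summable fun n => 2 * Real.sinh (k / 2) * (4 * e n + 4 * e (n + 1)) := by
    apply Summable.mul_left
    exact ((hsum.mul_left 4).add (((summable_nat_add_iff 1).mpr hsum).mul_left 4))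
  have hcauchy : CauchySeq z := cauchySeq_of_dist_le_of_summable _ hdist hsum2
  obtain ⟨p, hp⟩ := cauchySeq_tendsto_of_complete hcauchy
  refine ⟨p, ?_, hp⟩
  have hnorm : Filter.Tendsto (fun n => ‖z n‖) Filter.atTop (nhds ‖p‖) :=
    (continuous_norm.tendsto p).comp hp
  have he0 : Filter.Tendsto e Filter.atTop (nhds 0) := hsum.tendsto_atTop_zero
  have hlow : Filter.Tendsto (fun n => 1 - 4 * e n) Filter.atTop (nhds 1) := by
    have : Filter.Tendsto (fun n => 1 - 4 * e n) Filter.atTop (nhds (1 - 4 * 0)) :=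
      (tendsto_const_nhds.sub (he0.const_mul 4))
    simpa using this
  have hone : Filter.Tendsto (fun n => ‖z n‖) Filter.atTop (nhds 1) := by
    apply tendsto_of_tendsto_of_tendsto_of_le_of_le hlow tendsto_const_nhds
    · intro n
      show 1 - 4 * e n ≤ ‖z n‖
      have h := hbound n
      have h0 := norm_nonneg (z n); have h1 := hz n
      nlinarith [mul_nonneg h0 (by linarith : (0:ℝ) ≤ 1 - ‖z n‖)]
    · intro n; exact (hz n).le
  exact tendsto_nhds_unique hnorm hone
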